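/- Let μ, r ∈ ℝ and σ > 0. For u > 0, x ∈ (0,1), z ∈ ℝ, set A(u,z) := exp((μ − r − σ²/2)·u + σ·√u·z) and Y(u,x,z) := x·A(u,z)/(x·A(u,z) + 1 − x), and let γ denote the standard Gaussian measure on ℝ (mean 0, variance 1). Fix x ∈ (0,1). Then the function u ↦ ∫_ℝ (Y(u,x,z) − x)² dγ(z) is differentiable on (0,∞) and for every u > 0, d/du ∫_ℝ (Y(u,x,z) − x)² dγ(z) = ∫_ℝ Y(u,x,z)·(1 − Y(u,x,z))·( 2·(Y(u,x,z) − x)·(μ − r − σ²·Y(u,x,z)) + σ²·Y(u,x,z)·(1 − Y(u,x,z)) ) dγ(z) = −x²·(1−x)²·∫_ℝ (∂/∂x)( Y(u,x,z)·(1 − Y(u,x,z))·(μ − r − σ²·Y(u,x,z)) / ( x·(1−x) ) ) dγ(z). -/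

import Mathlib

open Set MeasureTheory ProbabilityTheory

/-- The uncontrolled wealth fraction
`Y(u,x,z) = x A/(x A + 1 − x)` with `A = exp((μ−r−σ²/2)u + σ√u z)`. -/
noncomputable def wealthFrac (μ r σ u x z : ℝ) : ℝ :=
  x * Real.exp ((μ - r - σ^2 / 2) * u + σ * Real.sqrt u * z)
    / (x * Real.exp ((μ - r - σ^2 / 2) * u + σ * Real.sqrt u * z) + 1 - x)

section Aux

open Real Filter Topology
open scoped NNReal ENNReal

lemma phi_eq : gaussianPDFReal 0 1 = fun z => (Real.sqrt (2*Real.pi))⁻¹ * Real.exp (-(1/2) * z^2) := by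
  funext z
  simp only [gaussianPDFReal, NNReal.coe_one, mul_one, sub_zero]
  congr 1
  ring

lemma gauss_integral_eq (g : ℝ → ℝ) :
    ∫ z, g z ∂(gaussianReal 0 1) = ∫ z, gaussianPDFReal 0 1 z * g z := by
  rw [gaussianReal_of_var_ne_zero 0 one_ne_zero]
  have h : gaussianPDF 0 1 = fun z => ((Real.toNNReal (gaussianPDFReal 0 1 z) : ℝ≥0) : ℝ≥0∞) := rfl
  rw [h, integral_withDensity_eq_integral_smul
    ((measurable_gaussianPDFReal 0 1).real_toNNReal) g]
  congr 1; ext z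
  simp [NNReal.smul_def, Real.coe_toNNReal _ (gaussianPDFReal_nonneg 0 1 z)]

lemma gauss_integrable_iff (g : ℝ → ℝ) :
    Integrable g (gaussianReal 0 1) ↔ Integrable (fun z => gaussianPDFReal 0 1 z * g z) := by
  rw [gaussianReal_of_var_ne_zero 0 one_ne_zero]
  have h : gaussianPDF 0 1 = fun z => ((Real.toNNReal (gaussianPDFReal 0 1 z) : ℝ≥0) : ℝ≥0∞) := rfl
  rw [h, integrable_withDensity_iff_integrable_smul
    ((measurable_gaussianPDFReal 0 1).real_toNNReal)]
  constructor <;> intro hh <;> refine hh.congr (Filter.Eventually.of_forall fun z => ?_) <;>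
    simp [NNReal.smul_def, Real.coe_toNNReal _ (gaussianPDFReal_nonneg 0 1 z)]

lemma gauss_integrable_id : Integrable (fun z : ℝ => z) (gaussianReal 0 1) := by
  rw [gauss_integrable_iff]
  have hK0 : (0:ℝ) < (Real.sqrt (2*Real.pi))⁻¹ := by positivity
  refine (((integrable_mul_exp_neg_mul_sq (b := 1/2) (by norm_num)).abs).const_mul
    ((Real.sqrt (2*Real.pi))⁻¹)).mono' ?_ (Eventually.of_forall fun z => ?_)
  · exact ((measurable_gaussianPDFReal 0 1).mul measurable_id).aestronglyMeasurable
  · have hφz : gaussianPDFReal 0 1 z = (Real.sqrt (2*Real.pi))⁻¹ * Real.exp (-(1/2) * z^2) := by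
      rw [phi_eq]
    simp only [Real.norm_eq_abs, hφz, abs_mul, abs_of_pos hK0, Real.abs_exp]
    exact le_of_eq (by ring)

lemma gaussian_ibp {f f' : ℝ → ℝ} (hd : ∀ z, HasDerivAt f (f' z) z)
    (hc' : Continuous f') {C : ℝ} (hfb : ∀ z, |f z| ≤ C) (hf'b : ∀ z, |f' z| ≤ C) :
    ∫ z, z * f z ∂(gaussianReal 0 1) = ∫ z, f' z ∂(gaussianReal 0 1) := by
  set K : ℝ := (Real.sqrt (2*Real.pi))⁻¹ with hK
  have hK0 : 0 < K := by
    rw [hK]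
    positivity
  set φ : ℝ → ℝ := gaussianPDFReal 0 1 with hφ
  have hφeq : ∀ z, φ z = K * Real.exp (-(1/2) * z^2) := fun z => by rw [hφ, phi_eq]
  have hφpos : ∀ z, 0 < φ z := fun z => by rw [hφeq]; positivity
  have hC : 0 ≤ C := le_trans (abs_nonneg _) (hfb 0)
  have hfc : Continuous f := by
    rw [continuous_iff_continuousAt]; exact fun z => (hd z).continuousAt
  have hφd : ∀ z, HasDerivAt φ (-z * φ z) z := by
    intro z
    have h1 : HasDerivAt (fun z : ℝ => -(1/2) * z^2) (-z) z := by
      have := (hasDerivAt_pow 2 z).const_mul (-(1/2) : ℝ)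
      refine this.congr_deriv ?_
      push_cast
      ring
    have h2 := (h1.exp.const_mul K)
    have h3 : φ = fun z => K * Real.exp (-(1/2) * z^2) := by rw [hφ, phi_eq]
    rw [h3]
    refine h2.congr_deriv ?_
    show K * (Real.exp (-(1/2) * z^2) * -z) = -z * (K * Real.exp (-(1/2) * z^2))
    ring
  have hφc : Continuous φ := by
    rw [hφ, phi_eq]; continuity
  have hg : ∀ z, HasDerivAt (fun z => f z * φ z) (f' z * φ z + f z * (-z * φ z)) z :=
    fun z => (hd z).mul (hφd z)
  have hint1 : Integrable (fun z : ℝ => C * K * Real.exp (-(1/2) * z^2)) :=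
    (integrable_exp_neg_mul_sq (by norm_num : (0:ℝ) < 1/2)).const_mul (C*K)
  have hint2 : Integrable (fun z : ℝ => C * K * |z * Real.exp (-(1/2) * z^2)|) :=
    ((integrable_mul_exp_neg_mul_sq (by norm_num : (0:ℝ) < 1/2)).abs).const_mul (C*K)
  have hb1 : ∀ z, ‖f' z * φ z‖ ≤ C * K * Real.exp (-(1/2) * z^2) := by
    intro z
    rw [Real.norm_eq_abs, abs_mul, abs_of_pos (hφpos z), hφeq z, ← mul_assoc]
    exact mul_le_mul_of_nonneg_right (mul_le_mul_of_nonneg_right (hf'b z) hK0.le)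
      (Real.exp_pos _).le
  have hb2 : ∀ z, ‖f z * (-z * φ z)‖ ≤ C * K * |z * Real.exp (-(1/2) * z^2)| := by
    intro z
    rw [Real.norm_eq_abs, abs_mul, abs_mul, abs_neg, abs_of_pos (hφpos z), hφeq z,
      abs_mul, abs_of_pos (Real.exp_pos _)]
    calc |f z| * (|z| * (K * Real.exp (-(1/2)*z^2)))
        ≤ C * (|z| * (K * Real.exp (-(1/2)*z^2))) := by
          exact mul_le_mul_of_nonneg_right (hfb z) (by positivity)
      _ = C * K * (|z| * Real.exp (-(1/2)*z^2)) := by ring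
  have hb3 : ∀ z, ‖f z * φ z‖ ≤ C * K * Real.exp (-(1/2) * z^2) := by
    intro z
    rw [Real.norm_eq_abs, abs_mul, abs_of_pos (hφpos z), hφeq z, ← mul_assoc]
    exact mul_le_mul_of_nonneg_right (mul_le_mul_of_nonneg_right (hfb z) hK0.le)
      (Real.exp_pos _).le
  have hi1 : Integrable (fun z => f' z * φ z) :=
    hint1.mono' ((hc'.mul hφc).aestronglyMeasurable) (Eventually.of_forall hb1)
  have hi2 : Integrable (fun z => f z * (-z * φ z)) :=
    hint2.mono' ((hfc.mul ((continuous_neg.mul hφc))).aestronglyMeasurable)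
      (Eventually.of_forall hb2)
  have hg'int : Integrable (fun z => f' z * φ z + f z * (-z * φ z)) := hi1.add hi2
  have hquad : ∀ l : Filter ℝ, Tendsto (abs : ℝ → ℝ) l atTop →
      Tendsto (fun z : ℝ => C * K * Real.exp (-(1/2) * z^2)) l (𝓝 0) := by
    intro l hl
    have hsq : Tendsto (fun z : ℝ => z^2) l atTop := by
      have h := (tendsto_pow_atTop (n := 2) (by norm_num)).comp hl
      exact h.congr (fun z => sq_abs z)
    have h1 : Tendsto (fun z : ℝ => -(1/2) * z^2) l atBot :=
      (tendsto_const_mul_atBot_of_neg (by norm_num)).2 hsq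
    have h2 := (Real.tendsto_exp_atBot.comp h1).const_mul (C*K)
    simpa using h2
  have hexp_top := hquad atTop tendsto_abs_atTop_atTop
  have hexp_bot := hquad atBot tendsto_abs_atBot_atTop
  have htop : Tendsto (fun z => f z * φ z) atTop (𝓝 0) :=
    squeeze_zero_norm hb3 hexp_top
  have hbot : Tendsto (fun z => f z * φ z) atBot (𝓝 0) :=
    squeeze_zero_norm hb3 hexp_bot
  have hIoi : ∫ z in Ioi (0:ℝ), (f' z * φ z + f z * (-z * φ z))
      = 0 - (f 0 * φ 0) :=
    integral_Ioi_of_hasDerivAt_of_tendsto' (fun z _ => hg z) hg'int.integrableOn htop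
  have hIic : ∫ z in Iic (0:ℝ), (f' z * φ z + f z * (-z * φ z))
      = (f 0 * φ 0) - 0 :=
    integral_Iic_of_hasDerivAt_of_tendsto' (fun z _ => hg z) hg'int.integrableOn hbot
  have htotal : ∫ z, (f' z * φ z + f z * (-z * φ z)) = 0 := by
    rw [← intervalIntegral.integral_Iic_add_Ioi hg'int.integrableOn hg'int.integrableOn,
      hIoi, hIic]
    ring
  rw [gauss_integral_eq, gauss_integral_eq, ← hφ]
  have hsum := integral_add hi1 hi2
  rw [htotal] at hsum
  have h2' : ∫ z, f z * (-z * φ z) = - ∫ z, φ z * (z * f z) := by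
    rw [← integral_neg]
    congr 1; funext z; ring
  have h1' : ∫ z, f' z * φ z = ∫ z, φ z * f' z := by
    congr 1; funext z; ring
  rw [h2', h1'] at hsum
  linarith [hsum]

lemma wf_mem (μ r σ s z : ℝ) {x : ℝ} (hx : x ∈ Ioo (0:ℝ) 1) :
    wealthFrac μ r σ s x z ∈ Ioo (0:ℝ) 1 := by
  obtain ⟨hx0, hx1⟩ := hx
  have hE0 : 0 < Real.exp ((μ - r - σ^2 / 2) * s + σ * Real.sqrt s * z) := Real.exp_pos _
  set E := Real.exp ((μ - r - σ^2 / 2) * s + σ * Real.sqrt s * z) with hE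
  have hD : 0 < x * E + 1 - x := by nlinarith
  constructor
  · show 0 < x * E / (x * E + 1 - x)
    positivity
  · show x * E / (x * E + 1 - x) < 1
    rw [div_lt_one hD]
    nlinarith

lemma wf_cont_z (μ r σ s : ℝ) {x : ℝ} (hx : x ∈ Ioo (0:ℝ) 1) :
    Continuous (fun z => wealthFrac μ r σ s x z) := by
  obtain ⟨hx0, hx1⟩ := hx
  have h1 : Continuous (fun z : ℝ => x * Real.exp ((μ - r - σ^2 / 2) * s + σ * Real.sqrt s * z)) := by
    fun_prop
  apply h1.div ((h1.add continuous_const).sub continuous_const)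
  intro z
  have hE0 : 0 < Real.exp ((μ - r - σ^2 / 2) * s + σ * Real.sqrt s * z) := Real.exp_pos _
  show x * Real.exp ((μ - r - σ^2 / 2) * s + σ * Real.sqrt s * z) + 1 - x ≠ 0
  nlinarith

lemma wf_hasDerivAt_s (μ r σ z : ℝ) {x s : ℝ} (hx : x ∈ Ioo (0:ℝ) 1) (hs : 0 < s) :
    HasDerivAt (fun t => wealthFrac μ r σ t x z)
      (wealthFrac μ r σ s x z * (1 - wealthFrac μ r σ s x z) *
        ((μ - r - σ^2/2) + σ * z / (2 * Real.sqrt s))) s := by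
  obtain ⟨hx0, hx1⟩ := hx
  have hsq0 : 0 < Real.sqrt s := Real.sqrt_pos.2 hs
  set c := μ - r - σ^2/2 with hc
  have hsd : HasDerivAt (fun t : ℝ => c * t + σ * Real.sqrt t * z)
      (c + σ * (1/(2*Real.sqrt s)) * z) s := by
    have h1 : HasDerivAt (fun t : ℝ => c * t) c s := by
      simpa using (hasDerivAt_id s).const_mul c
    have h2 : HasDerivAt (fun t : ℝ => σ * Real.sqrt t * z) (σ * (1/(2*Real.sqrt s)) * z) s :=
      ((Real.hasDerivAt_sqrt hs.ne').const_mul σ).mul_const z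
    exact h1.add h2
  have hE := hsd.exp
  have hE0 : 0 < Real.exp (c * s + σ * Real.sqrt s * z) := Real.exp_pos _
  set E := Real.exp (c * s + σ * Real.sqrt s * z) with hEdef
  set d := c + σ * (1/(2*Real.sqrt s)) * z with hd
  have hD0 : x * E + 1 - x ≠ 0 := by nlinarith
  have hxe := hE.const_mul x
  have hDen := (hxe.add_const 1).sub_const x
  have hdiv := hxe.div hDen hD0
  have hwf : wealthFrac μ r σ s x z = x * E / (x * E + 1 - x) := rfl
  have hval : (x * (E * d) * (x * E + 1 - x) - x * E * (x * (E * d))) / (x * E + 1 - x)^2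
      = wealthFrac μ r σ s x z * (1 - wealthFrac μ r σ s x z) * (c + σ * z / (2 * Real.sqrt s)) := by
    rw [hwf, hd]
    field_simp
  rw [← hval]
  exact hdiv

lemma wf_hasDerivAt_z (μ r σ u x z : ℝ) (hx : x ∈ Ioo (0:ℝ) 1) :
    HasDerivAt (fun z => wealthFrac μ r σ u x z)
      (wealthFrac μ r σ u x z * (1 - wealthFrac μ r σ u x z) * (σ * Real.sqrt u)) z := by
  obtain ⟨hx0, hx1⟩ := hx
  set c := μ - r - σ^2/2 with hc
  have hsd : HasDerivAt (fun z : ℝ => c * u + σ * Real.sqrt u * z) (σ * Real.sqrt u) z := by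
    simpa using ((hasDerivAt_id z).const_mul (σ * Real.sqrt u)).const_add (c * u)
  have hE := hsd.exp
  have hE0 : 0 < Real.exp (c * u + σ * Real.sqrt u * z) := Real.exp_pos _
  set E := Real.exp (c * u + σ * Real.sqrt u * z) with hEdef
  have hD0 : x * E + 1 - x ≠ 0 := by nlinarith
  have hxe := hE.const_mul x
  have hDen := (hxe.add_const 1).sub_const x
  have hdiv := hxe.div hDen hD0
  have hwf : wealthFrac μ r σ u x z = x * E / (x * E + 1 - x) := rfl
  have hval : (x * (E * (σ * Real.sqrt u)) * (x * E + 1 - x) - x * E * (x * (E * (σ * Real.sqrt u))))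
        / (x * E + 1 - x)^2
      = wealthFrac μ r σ u x z * (1 - wealthFrac μ r σ u x z) * (σ * Real.sqrt u) := by
    rw [hwf]
    field_simp
  rw [← hval]
  exact hdiv

lemma part2_pointwise (μ r σ u z : ℝ) {x : ℝ} (hx : x ∈ Ioo (0:ℝ) 1) :
    wealthFrac μ r σ u x z * (1 - wealthFrac μ r σ u x z) *
      (2 * (wealthFrac μ r σ u x z - x) * (μ - r - σ^2 * wealthFrac μ r σ u x z)
        + σ^2 * wealthFrac μ r σ u x z * (1 - wealthFrac μ r σ u x z))
    = -(x^2) * (1 - x)^2 *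
        deriv (fun x' : ℝ =>
          wealthFrac μ r σ u x' z * (1 - wealthFrac μ r σ u x' z) *
            (μ - r - σ^2 * wealthFrac μ r σ u x' z) / (x' * (1 - x'))) x := by
  obtain ⟨hx0, hx1⟩ := hx
  have hE0 : 0 < Real.exp ((μ - r - σ^2/2) * u + σ * Real.sqrt u * z) := Real.exp_pos _
  set E := Real.exp ((μ - r - σ^2/2) * u + σ * Real.sqrt u * z) with hE
  have hD0 : 0 < x * E + 1 - x := by nlinarith
  have hYx : HasDerivAt (fun x' : ℝ => wealthFrac μ r σ u x' z)
      ((E * (x*E+1-x) - x*E*(E-1)) / (x*E+1-x)^2) x := by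
    have he : HasDerivAt (fun x' : ℝ => x' * E) E x := by
      simpa using (hasDerivAt_id x).mul_const E
    have hDen : HasDerivAt (fun x' : ℝ => x' * E + 1 - x') (E - 1) x := by
      exact (he.add_const 1).sub (hasDerivAt_id x)
    exact he.div hDen hD0.ne'
  set Y' := (E * (x*E+1-x) - x*E*(E-1)) / (x*E+1-x)^2 with hY'
  have h1 := hYx.mul ((hasDerivAt_const x (1:ℝ)).sub hYx)
  have h2 : HasDerivAt (fun x' : ℝ => μ - r - σ^2 * wealthFrac μ r σ u x' z) (-(σ^2*Y')) x := by
    simpa using (hYx.const_mul (σ^2)).const_sub (μ - r)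
  have h3 := h1.mul h2
  have hxne : x * (1 - x) ≠ 0 := by nlinarith
  have hden : HasDerivAt (fun x' : ℝ => x' * (1 - x')) (1*(1-x) + x*(0-1)) x :=
    (hasDerivAt_id x).mul ((hasDerivAt_const x (1:ℝ)).sub (hasDerivAt_id x))
  have hG := h3.div hden hxne
  have hG' : HasDerivAt (fun x' : ℝ => wealthFrac μ r σ u x' z * (1 - wealthFrac μ r σ u x' z) *
      (μ - r - σ^2 * wealthFrac μ r σ u x' z) / (x' * (1 - x'))) _ x := hG
  rw [hG'.deriv]
  simp only [Pi.mul_apply, Pi.sub_apply]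
  have hwf : wealthFrac μ r σ u x z = x * E / (x*E+1-x) := rfl
  rw [hwf, hY']
  field_simp
  ring

end Aux

open Real Filter Topology

set_option maxHeartbeats 1600000 in
/-- Itô/Dynkin identity for `u ↦ E[(Y(u,x,·) − x)²]` (equations (B.2)–(B.3)):
the function is differentiable on `(0,∞)` with derivative
`E[Y(1−Y)(2(Y−x)(μ−r−σ²Y) + σ²Y(1−Y))]`, which in turn equals
`−x²(1−x)² E[∂/∂x (Y(1−Y)(μ−r−σ²Y)/(x(1−x)))]`. -/
theorem wealthFrac_second_moment_derivative (μ r σ : ℝ) (hσ : 0 < σ)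
    (x : ℝ) (hx : x ∈ Ioo (0:ℝ) 1) :
    ∀ u : ℝ, 0 < u →
      HasDerivAt
        (fun s : ℝ => ∫ z, (wealthFrac μ r σ s x z - x)^2 ∂(gaussianReal 0 1))
        (∫ z, wealthFrac μ r σ u x z * (1 - wealthFrac μ r σ u x z) *
            (2 * (wealthFrac μ r σ u x z - x) * (μ - r - σ^2 * wealthFrac μ r σ u x z)
              + σ^2 * wealthFrac μ r σ u x z * (1 - wealthFrac μ r σ u x z))
          ∂(gaussianReal 0 1)) u ∧
      (∫ z, wealthFrac μ r σ u x z * (1 - wealthFrac μ r σ u x z) *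
            (2 * (wealthFrac μ r σ u x z - x) * (μ - r - σ^2 * wealthFrac μ r σ u x z)
              + σ^2 * wealthFrac μ r σ u x z * (1 - wealthFrac μ r σ u x z))
          ∂(gaussianReal 0 1))
        = -(x^2) * (1 - x)^2 *
            ∫ z, deriv (fun x' : ℝ =>
                wealthFrac μ r σ u x' z * (1 - wealthFrac μ r σ u x' z) *
                  (μ - r - σ^2 * wealthFrac μ r σ u x' z) / (x' * (1 - x')))
              x ∂(gaussianReal 0 1) := by
  intro u hu
  obtain ⟨hx0, hx1⟩ := id hx
  have hsqu : 0 < Real.sqrt u := Real.sqrt_pos.2 hu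
  set γ : Measure ℝ := gaussianReal 0 1 with hγ
  set c : ℝ := μ - r - σ^2/2 with hc
  set Y : ℝ → ℝ → ℝ := fun s z => wealthFrac μ r σ s x z with hY
  have hYmem : ∀ s z, Y s z ∈ Ioo (0:ℝ) 1 := fun s z => wf_mem μ r σ s z hx
  have hYc : ∀ s, Continuous (fun z => Y s z) := fun s => wf_cont_z μ r σ s hx
  set F' : ℝ → ℝ → ℝ :=
    fun s z => 2 * (Y s z - x) * (Y s z * (1 - Y s z) * (c + σ * z / (2 * Real.sqrt s)))
    with hF'
  have h_diff : ∀ z : ℝ, ∀ s ∈ Metric.ball u (u/2),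
      HasDerivAt (fun t => (Y t z - x)^2) (F' s z) s := by
    intro z s hs
    have hs0 : 0 < s := by
      rw [Metric.mem_ball, Real.dist_eq, abs_lt] at hs
      linarith [hs.1]
    have h := ((wf_hasDerivAt_s μ r σ z hx hs0).sub_const x).pow 2
    refine h.congr_deriv ?_
    simp only [hF', hY, hc]
    push_cast
    ring
  have hFint : Integrable (fun z => (Y u z - x)^2) γ := by
    refine ⟨(((hYc u).sub continuous_const).pow 2).aestronglyMeasurable, ?_⟩
    refine HasFiniteIntegral.of_bounded (C := 1) (Eventually.of_forall fun z => ?_)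
    have h := hYmem u z
    rw [Real.norm_eq_abs, abs_le]
    constructor <;> nlinarith [h.1, h.2]
  have hq : Continuous (fun z : ℝ => c + σ * z / (2 * Real.sqrt u)) :=
    continuous_const.add ((continuous_const.mul continuous_id).div_const _)
  have hNc : Continuous (fun z => Y u z * (1 - Y u z)) :=
    (hYc u).mul (continuous_const.sub (hYc u))
  have hF'meas : AEStronglyMeasurable (fun z => F' u z) γ := by
    have hcont : Continuous (fun z => F' u z) := by
      simp only [hF']
      exact (continuous_const.mul ((hYc u).sub continuous_const)).mul (hNc.mul hq)
    exact hcont.aestronglyMeasurable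
  set B : ℝ → ℝ := fun z => 2 * (|c| + σ * |z| / (2 * Real.sqrt (u/2))) with hB
  have hsqu2 : 0 < Real.sqrt (u/2) := Real.sqrt_pos.2 (by linarith)
  have h_bound : ∀ᵐ z ∂γ, ∀ s ∈ Metric.ball u (u/2), ‖F' s z‖ ≤ B z := by
    refine Eventually.of_forall fun z => fun s hs => ?_
    have hs0 : u/2 < s := by
      rw [Metric.mem_ball, Real.dist_eq, abs_lt] at hs
      linarith [hs.1]
    have hsq : Real.sqrt (u/2) ≤ Real.sqrt s := Real.sqrt_le_sqrt hs0.le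
    have hsqs : 0 < Real.sqrt s := lt_of_lt_of_le hsqu2 hsq
    have hY1 := hYmem s z
    have h1 : |Y s z - x| ≤ 1 := by
      rw [abs_le]; constructor <;> nlinarith [hY1.1, hY1.2]
    have h2 : |Y s z * (1 - Y s z)| ≤ 1 := by
      rw [abs_le]; constructor <;> nlinarith [hY1.1, hY1.2]
    have h3 : |c + σ * z / (2 * Real.sqrt s)| ≤ |c| + σ * |z| / (2 * Real.sqrt (u/2)) := by
      refine (abs_add_le _ _).trans ?_
      have habs : |σ * z / (2 * Real.sqrt s)| = σ * |z| / (2 * Real.sqrt s) := by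
        rw [abs_div, abs_mul, abs_of_pos hσ, abs_of_pos (by positivity : (0:ℝ) < 2 * Real.sqrt s)]
      rw [habs]
      gcongr
    rw [Real.norm_eq_abs]
    simp only [hF', hB]
    rw [abs_mul, abs_mul, abs_mul, abs_two]
    calc 2 * |Y s z - x| * (|Y s z * (1 - Y s z)| * |c + σ * z / (2 * Real.sqrt s)|)
        ≤ 2 * 1 * (1 * (|c| + σ * |z| / (2 * Real.sqrt (u/2)))) := by
          gcongr
      _ = 2 * (|c| + σ * |z| / (2 * Real.sqrt (u/2))) := by ring
  have hBint : Integrable B γ := by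
    have hBeq : B = fun z => 2*|c| + (σ/Real.sqrt (u/2)) * |z| := by
      funext z
      simp only [hB]
      field_simp
    rw [hBeq, hγ]
    exact (integrable_const _).add ((gauss_integrable_id.abs).const_mul _)
  have hFmeas : ∀ᶠ s in 𝓝 u, AEStronglyMeasurable (fun z => (Y s z - x)^2) γ :=
    Eventually.of_forall fun s => (((hYc s).sub continuous_const).pow 2).aestronglyMeasurable
  have main := hasDerivAt_integral_of_dominated_loc_of_deriv_le (Metric.ball_mem_nhds u (half_pos hu)) hFmeas hFint
    hF'meas h_bound hBint (Eventually.of_forall fun z s hs => h_diff z s hs)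
  have hder : HasDerivAt (fun s => ∫ z, (Y s z - x)^2 ∂γ) (∫ z, F' u z ∂γ) u := main.2
  -- integration by parts in z
  set f : ℝ → ℝ := fun z => (Y u z - x) * (Y u z * (1 - Y u z)) with hf
  set g : ℝ → ℝ := fun z =>
    (Y u z * (1 - Y u z) + (Y u z - x) * (1 - 2 * Y u z)) *
      (Y u z * (1 - Y u z) * (σ * Real.sqrt u)) with hg
  have hfd : ∀ z, HasDerivAt f (g z) z := by
    intro z
    have hYz := wf_hasDerivAt_z μ r σ u x z hx
    have h := (hYz.sub_const x).mul (hYz.mul ((hasDerivAt_const z (1:ℝ)).sub hYz))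
    refine h.congr_deriv ?_
    simp only [hg, hY, Pi.mul_apply, Pi.sub_apply]
    ring
  have hfc : Continuous f := by
    simp only [hf]
    exact ((hYc u).sub continuous_const).mul hNc
  have hgc : Continuous g := by
    simp only [hg]
    exact (hNc.add (((hYc u).sub continuous_const).mul
      (continuous_const.sub (continuous_const.mul (hYc u))))).mul (hNc.mul continuous_const)
  set C : ℝ := 1 + 4 * (σ * Real.sqrt u) with hC
  have hYxb : ∀ z, |Y u z - x| ≤ 1 := fun z => by
    have h := hYmem u z; rw [abs_le]; constructor <;> nlinarith [h.1, h.2]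
  have hNb : ∀ z, |Y u z * (1 - Y u z)| ≤ 1 := fun z => by
    have h := hYmem u z; rw [abs_le]; constructor <;> nlinarith [h.1, h.2]
  have hfb : ∀ z, |f z| ≤ C := by
    intro z
    simp only [hf]
    rw [abs_mul]
    calc |Y u z - x| * |Y u z * (1 - Y u z)| ≤ 1 * 1 :=
          mul_le_mul (hYxb z) (hNb z) (abs_nonneg _) zero_le_one
      _ ≤ C := by rw [hC]; nlinarith [mul_pos hσ hsqu]
  have hgb : ∀ z, |g z| ≤ C := by
    intro z
    have h := hYmem u z
    have h2Y : |1 - 2 * Y u z| ≤ 3 := by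
      rw [abs_le]; constructor <;> nlinarith [h.1, h.2]
    simp only [hg]
    rw [abs_mul]
    have hprod : |(Y u z - x) * (1 - 2 * Y u z)| ≤ 3 := by
      rw [abs_mul]
      calc |Y u z - x| * |1 - 2 * Y u z| ≤ 1 * 3 :=
            mul_le_mul (hYxb z) h2Y (abs_nonneg _) zero_le_one
        _ = 3 := by norm_num
    have hA : |Y u z * (1 - Y u z) + (Y u z - x) * (1 - 2 * Y u z)| ≤ 4 :=
      (abs_add_le _ _).trans (by linarith [hNb z, hprod])
    have hB2 : |Y u z * (1 - Y u z) * (σ * Real.sqrt u)| ≤ σ * Real.sqrt u := by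
      rw [abs_mul, abs_of_pos (mul_pos hσ hsqu)]
      calc |Y u z * (1 - Y u z)| * (σ * Real.sqrt u) ≤ 1 * (σ * Real.sqrt u) :=
            mul_le_mul_of_nonneg_right (hNb z) (mul_pos hσ hsqu).le
        _ = σ * Real.sqrt u := one_mul _
    calc |Y u z * (1 - Y u z) + (Y u z - x) * (1 - 2 * Y u z)| *
          |Y u z * (1 - Y u z) * (σ * Real.sqrt u)|
        ≤ 4 * (σ * Real.sqrt u) := mul_le_mul hA hB2 (abs_nonneg _) (by norm_num)
      _ ≤ C := by rw [hC]; nlinarith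
  have hibp : ∫ z, z * f z ∂γ = ∫ z, g z ∂γ := by
    rw [hγ]
    exact gaussian_ibp hfd hgc hfb hgb
  have hintf : Integrable f γ :=
    ⟨hfc.aestronglyMeasurable, HasFiniteIntegral.of_bounded (C := C)
      (Eventually.of_forall fun z => by rw [Real.norm_eq_abs]; exact hfb z)⟩
  have hintg : Integrable g γ :=
    ⟨hgc.aestronglyMeasurable, HasFiniteIntegral.of_bounded (C := C)
      (Eventually.of_forall fun z => by rw [Real.norm_eq_abs]; exact hgb z)⟩
  have hintzf : Integrable (fun z => z * f z) γ := by
    have h := (gauss_integrable_id.bdd_mul (c := C) hfc.aestronglyMeasurable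
      (Eventually.of_forall fun z => by rw [Real.norm_eq_abs]; exact hfb z))
    rw [← hγ] at h
    exact h.congr (Eventually.of_forall fun z => mul_comm _ _)
  set T : ℝ → ℝ := fun z => Y u z * (1 - Y u z) *
      (2 * (Y u z - x) * (μ - r - σ^2 * Y u z) + σ^2 * Y u z * (1 - Y u z)) with hT
  have key : (∫ z, F' u z ∂γ) = ∫ z, T z ∂γ := by
    have e1 : (fun z => F' u z) = fun z => 2*c*f z + (σ/Real.sqrt u) * (z * f z) := by
      funext z
      simp only [hF', hf]
      ring
    have e2 : (fun z => T z) = fun z => 2*c*f z + (σ/Real.sqrt u) * g z := by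
      funext z
      simp only [hT, hf, hg, hc]
      field_simp
      ring
    calc ∫ z, F' u z ∂γ
        = ∫ z, (2*c*f z + (σ/Real.sqrt u) * (z * f z)) ∂γ := by rw [e1]
      _ = 2*c*(∫ z, f z ∂γ) + (σ/Real.sqrt u) * ∫ z, z * f z ∂γ := by
          rw [integral_add (hintf.const_mul _) (hintzf.const_mul _),
            integral_const_mul, integral_const_mul]
      _ = 2*c*(∫ z, f z ∂γ) + (σ/Real.sqrt u) * ∫ z, g z ∂γ := by rw [hibp]
      _ = ∫ z, (2*c*f z + (σ/Real.sqrt u) * g z) ∂γ := by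
          rw [integral_add (hintf.const_mul _) (hintg.const_mul _),
            integral_const_mul, integral_const_mul]
      _ = ∫ z, T z ∂γ := by rw [e2]
  constructor
  · rw [key] at hder
    simp only [hY, hT] at hder
    exact hder
  · rw [← integral_const_mul]
    exact integral_congr_ae (Eventually.of_forall fun z => part2_pointwise μ r σ u z hx)
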